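/- Let M = (M, 0, +, <, ...) be an expansion of an ordered group with definable choice (for example an o-minimal expansion of an ordered group), and let (X, d) be a definable metric space with its metric topology. The following are equivalent: (1) (X, d) is definably separable; (2) (X, d) is hereditarily definably separable; (3) (X, d) does not contain an infinite definable subset whose subspace topology is discrete. -/

import Mathlib

open FirstOrder Set TopologicalSpace

/-- The fiber of a set `T ⊆ M^(β ⊕ α)` over an index tuple `b : β → M`. -/
def fiberAt {M : Type*} {α β : Type*} (T : Set ((β ⊕ α) → M)) (b : β → M) :
    Set (α → M) :=
  {a | Sum.elim b a ∈ T}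

/-- `(X, τ)` is definably separable: there is no infinite definable family of pairwise
disjoint `τ`-open sets. -/
def DefSeparable (L : FirstOrder.Language) {M : Type*} [L.Structure M] {n : ℕ}
    (X : Set (Fin n → M)) (τ : TopologicalSpace ↥X) : Prop :=
  ¬ ∃ (k : ℕ) (B : Set (Fin k → M)) (T : Set ((Fin k ⊕ Fin n) → M)),
      Set.Definable (Set.univ : Set M) L B ∧ Set.Definable (Set.univ : Set M) L T ∧
      (∀ b ∈ B, fiberAt T b ⊆ X ∧ τ.IsOpen (Subtype.val ⁻¹' fiberAt T b)) ∧
      (∀ b ∈ B, ∀ c ∈ B, fiberAt T b ≠ fiberAt T c →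
        Disjoint (fiberAt T b) (fiberAt T c)) ∧
      {s : Set (Fin n → M) | ∃ b ∈ B, s = fiberAt T b}.Infinite

/-- `(X, τ)` is hereditarily definably separable: every definable subspace of `(X, τ)`,
with the subspace topology, is definably separable. -/
def HereditarilyDefSeparable (L : FirstOrder.Language) {M : Type*} [L.Structure M] {n : ℕ}
    (X : Set (Fin n → M)) (τ : TopologicalSpace ↥X) : Prop :=
  ∀ (Y : Set (Fin n → M)) (hYX : Y ⊆ X), Set.Definable (Set.univ : Set M) L Y →
    DefSeparable L Y (TopologicalSpace.induced (fun y : ↥Y => (⟨y.1, hYX y.2⟩ : ↥X)) τ)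

/-- `(X, τ)` contains an infinite definable subset whose subspace topology is discrete. -/
def HasInfiniteDefDiscreteSubspace (L : FirstOrder.Language) {M : Type*} [L.Structure M]
    {n : ℕ} (X : Set (Fin n → M)) (τ : TopologicalSpace ↥X) : Prop :=
  ∃ (Y : Set (Fin n → M)) (hYX : Y ⊆ X), Set.Definable (Set.univ : Set M) L Y ∧
    Y.Infinite ∧
    TopologicalSpace.induced (fun y : ↥Y => (⟨y.1, hYX y.2⟩ : ↥X)) τ = ⊥

/-- `M` has definable choice: for every definable family of non-empty sets
`{A_b : b ∈ B}` there is a definable map `f` with `f b ∈ A_b` for all `b ∈ B` and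
`f b = f c` whenever `A_b = A_c`. -/
def HasDefinableChoice (L : FirstOrder.Language) (M : Type*) [L.Structure M] : Prop :=
  ∀ (k n : ℕ) (B : Set (Fin k → M)) (T : Set ((Fin k ⊕ Fin n) → M)),
    Set.Definable (Set.univ : Set M) L B → Set.Definable (Set.univ : Set M) L T →
    (∀ b ∈ B, (fiberAt T b).Nonempty) →
    ∃ f : (Fin k → M) → (Fin n → M),
      Set.Definable (Set.univ : Set M) L
        {p : (Fin k ⊕ Fin n) → M | (p ∘ Sum.inl) ∈ B ∧ p ∘ Sum.inr = f (p ∘ Sum.inl)} ∧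
      (∀ b ∈ B, f b ∈ fiberAt T b) ∧
      (∀ b ∈ B, ∀ c ∈ B, fiberAt T b = fiberAt T c → f b = f c)

/-- The structure `M` expands an ordered (abelian) group: the order and the graph of
addition are definable. -/
def ExpandsOrderedGroup (L : FirstOrder.Language) (M : Type*) [L.Structure M]
    [AddCommGroup M] [LinearOrder M] [IsOrderedAddMonoid M] : Prop :=
  Set.Definable (Set.univ : Set M) L {p : Fin 2 → M | p 0 < p 1} ∧
  Set.Definable (Set.univ : Set M) L {p : Fin 3 → M | p 0 + p 1 = p 2}

/-- The open ball of center `x` and radius `t` of a metric `d` on `X`. -/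
def mball {M : Type*} [AddCommGroup M] [LinearOrder M] [IsOrderedAddMonoid M] {n : ℕ} (X : Set (Fin n → M))
    (d : (Fin n → M) → (Fin n → M) → M) (x : Fin n → M) (t : M) : Set (Fin n → M) :=
  {y ∈ X | d x y < t}

/-- The metric topology on `X`: the topology generated by the open balls. -/
def metricTop {M : Type*} [AddCommGroup M] [LinearOrder M] [IsOrderedAddMonoid M] {n : ℕ} (X : Set (Fin n → M))
    (d : (Fin n → M) → (Fin n → M) → M) : TopologicalSpace ↥X :=
  TopologicalSpace.generateFrom
    {s : Set ↥X | ∃ x ∈ X, ∃ t > (0 : M), s = Subtype.val ⁻¹' mball X d x t}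

/-- `(X, d)` is a definable metric space: `X` and the graph of `d` on `X × X` are
definable, and `d` satisfies the metric axioms on `X`. -/
def IsDefMetricSpace (L : FirstOrder.Language) {M : Type*} [L.Structure M]
    [AddCommGroup M] [LinearOrder M] [IsOrderedAddMonoid M] {n : ℕ} (X : Set (Fin n → M))
    (d : (Fin n → M) → (Fin n → M) → M) : Prop :=
  Set.Definable (Set.univ : Set M) L X ∧
  Set.Definable (Set.univ : Set M) L
    {p : ((Fin n ⊕ Fin n) ⊕ Fin 1) → M |
      (fun i => p (Sum.inl (Sum.inl i))) ∈ X ∧ (fun i => p (Sum.inl (Sum.inr i))) ∈ X ∧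
      d (fun i => p (Sum.inl (Sum.inl i))) (fun i => p (Sum.inl (Sum.inr i))) =
        p (Sum.inr 0)} ∧
  (∀ x ∈ X, ∀ y ∈ X, 0 ≤ d x y) ∧
  (∀ x ∈ X, ∀ y ∈ X, (d x y = 0 ↔ x = y)) ∧
  (∀ x ∈ X, ∀ y ∈ X, d x y = d y x) ∧
  (∀ x ∈ X, ∀ y ∈ X, ∀ z ∈ X, d x z ≤ d x y + d y z)


section DefAux
variable {L : FirstOrder.Language} {M : Type*} [L.Structure M] {α β γ : Type*}

lemma defin_congr {s t : Set (α → M)} (h : Set.Definable (Set.univ : Set M) L s)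
    (e : t = s) : Set.Definable (Set.univ : Set M) L t := e ▸ h

lemma defin_pull (f : α → γ) {s : Set (α → M)} (h : Set.Definable (Set.univ : Set M) L s) :
    Set.Definable (Set.univ : Set M) L {p : γ → M | p ∘ f ∈ s} :=
  h.preimage_comp f

lemma defin_exists [Finite α] [Finite β] {S : Set ((β ⊕ α) → M)}
    (h : Set.Definable (Set.univ : Set M) L S) :
    Set.Definable (Set.univ : Set M) L {b : β → M | ∃ a : α → M, Sum.elim b a ∈ S} := by
  apply defin_congr (h.image_comp Sum.inl)
  ext b
  simp only [mem_setOf_eq, mem_image]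
  constructor
  · rintro ⟨a, ha⟩
    exact ⟨Sum.elim b a, ha, Sum.elim_comp_inl _ _⟩
  · rintro ⟨p, hp, rfl⟩
    exact ⟨p ∘ Sum.inr, by rwa [Sum.elim_comp_inl_inr]⟩

lemma defin_forall [Finite α] [Finite β] {S : Set ((β ⊕ α) → M)}
    (h : Set.Definable (Set.univ : Set M) L S) :
    Set.Definable (Set.univ : Set M) L {b : β → M | ∀ a : α → M, Sum.elim b a ∈ S} := by
  apply defin_congr (defin_exists h.compl).compl
  ext b
  simp

lemma defin_eqCoord (i j : α) :
    Set.Definable (Set.univ : Set M) L {p : α → M | p i = p j} :=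
  ⟨(FirstOrder.Language.Term.var i).equal (FirstOrder.Language.Term.var j), by ext; simp⟩

lemma defin_eqTuple [Fintype α] (f g : α → γ) :
    Set.Definable (Set.univ : Set M) L {p : γ → M | p ∘ f = p ∘ g} := by
  apply defin_congr (Set.definable_biInter_finset
    (f := fun i : α => {p : γ → M | p (f i) = p (g i)}) (fun i => defin_eqCoord _ _) Finset.univ)
  ext p
  simp [funext_iff, Function.comp]

lemma defin_lt [LT M] (hlt : Set.Definable (Set.univ : Set M) L {p : Fin 2 → M | p 0 < p 1})
    (i j : α) : Set.Definable (Set.univ : Set M) L {p : α → M | p i < p j} := by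
  apply defin_congr (defin_pull ![i, j] hlt)
  ext p
  simp [Function.comp]

lemma defin_pos [Finite α] [AddGroup M] [PartialOrder M]
    (hlt : Set.Definable (Set.univ : Set M) L {p : Fin 2 → M | p 0 < p 1})
    (hadd : Set.Definable (Set.univ : Set M) L {p : Fin 3 → M | p 0 + p 1 = p 2})
    (j : α) : Set.Definable (Set.univ : Set M) L {p : α → M | 0 < p j} := by
  have h0 : Set.Definable (Set.univ : Set M) L
      {u : (α ⊕ Fin 1) → M | u ∘ (fun _ : Fin 3 => (Sum.inr 0 : α ⊕ Fin 1)) ∈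
        {p : Fin 3 → M | p 0 + p 1 = p 2}} := defin_pull _ hadd
  have h1 : Set.Definable (Set.univ : Set M) L
      {u : (α ⊕ Fin 1) → M | u (Sum.inr 0) < u (Sum.inl j)} := defin_lt hlt _ _
  apply defin_congr (defin_exists (h0.inter h1))
  ext p
  simp only [mem_setOf_eq, mem_inter_iff, Function.comp, Sum.elim_inr, Sum.elim_inl]
  constructor
  · intro h
    exact ⟨fun _ => 0, by simp, by simpa using h⟩
  · rintro ⟨a, h1, h2⟩
    have : a 0 = 0 := add_left_cancel (by simpa using h1 : a 0 + a 0 = a 0 + 0)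
    rwa [this] at h2

end DefAux

section TopAux
variable {M : Type*} [AddCommGroup M] [LinearOrder M] [IsOrderedAddMonoid M] {n : ℕ} {X : Set (Fin n → M)}
  {d : (Fin n → M) → (Fin n → M) → M}

lemma metricTop_ball_basis
    (htri : ∀ x ∈ X, ∀ y ∈ X, ∀ z ∈ X, d x z ≤ d x y + d y z)
    (hpos : ∃ t : M, 0 < t)
    {V : Set ↥X} (hV : (metricTop X d).IsOpen V) {w : ↥X} (hw : w ∈ V) :
    ∃ t > (0 : M), (Subtype.val ⁻¹' mball X d w.1 t) ⊆ V := by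
  have key : ∀ V : Set ↥X, TopologicalSpace.GenerateOpen
      {s : Set ↥X | ∃ x ∈ X, ∃ t > (0 : M), s = Subtype.val ⁻¹' mball X d x t} V →
      ∀ w : ↥X, w ∈ V → ∃ t > (0 : M), (Subtype.val ⁻¹' mball X d w.1 t) ⊆ V := by
    intro V hV
    induction hV with
    | basic s hs =>
      obtain ⟨x, hx, t, ht, rfl⟩ := hs
      intro w hw
      have hdxw : d x w.1 < t := hw.2
      refine ⟨t - d x w.1, sub_pos.2 hdxw, ?_⟩
      intro z hz
      refine ⟨z.2, ?_⟩
      calc d x z.1 ≤ d x w.1 + d w.1 z.1 := htri x hx w.1 w.2 z.1 z.2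
        _ < d x w.1 + (t - d x w.1) := add_lt_add_right hz.2 _
        _ = t := by abel
    | univ =>
      obtain ⟨t, ht⟩ := hpos
      exact fun w _ => ⟨t, ht, fun z _ => trivial⟩
    | inter s t hs ht ihs iht =>
      intro w hw
      obtain ⟨r1, hr1, h1⟩ := ihs w hw.1
      obtain ⟨r2, hr2, h2⟩ := iht w hw.2
      refine ⟨min r1 r2, lt_min hr1 hr2, fun z hz => ?_⟩
      exact ⟨h1 ⟨hz.1, lt_of_lt_of_le hz.2 (min_le_left _ _)⟩,
        h2 ⟨hz.1, lt_of_lt_of_le hz.2 (min_le_right _ _)⟩⟩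
    | sUnion S hS ih =>
      rintro w ⟨s, hsS, hws⟩
      obtain ⟨t, ht, hsub⟩ := ih s hsS w hws
      exact ⟨t, ht, hsub.trans (subset_sUnion_of_mem hsS)⟩
  exact key V hV w hw

lemma metricTop_subspace_basis {Y : Set (Fin n → M)} (hYX : Y ⊆ X)
    (htri : ∀ x ∈ X, ∀ y ∈ X, ∀ z ∈ X, d x z ≤ d x y + d y z)
    (hpos : ∃ t : M, 0 < t)
    {U : Set ↥Y}
    (hU : (TopologicalSpace.induced (fun y : ↥Y => (⟨y.1, hYX y.2⟩ : ↥X))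
      (metricTop X d)).IsOpen U)
    {w : ↥Y} (hw : w ∈ U) :
    ∃ t > (0 : M), ∀ v : ↥Y, d w.1 v.1 < t → v ∈ U := by
  letI : TopologicalSpace ↥X := metricTop X d
  obtain ⟨V, hV, hVU⟩ := isOpen_induced_iff.mp hU
  have hwV : (⟨w.1, hYX w.2⟩ : ↥X) ∈ V := by rw [← hVU] at hw; exact hw
  obtain ⟨t, ht, hsub⟩ := metricTop_ball_basis htri hpos hV hwV
  refine ⟨t, ht, fun v hv => ?_⟩
  have : (⟨v.1, hYX v.2⟩ : ↥X) ∈ V := hsub ⟨hYX v.2, hv⟩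
  rw [← hVU]
  exact this

lemma exists_sep_radius
    (hsymm : ∀ x ∈ X, ∀ y ∈ X, d x y = d y x)
    (htri : ∀ x ∈ X, ∀ y ∈ X, ∀ z ∈ X, d x z ≤ d x y + d y z)
    {Y : Set (Fin n → M)} (hYX : Y ⊆ X) {y : Fin n → M} (hy : y ∈ Y) {t0 : M} (ht0 : 0 < t0)
    (hiso : ∀ y' ∈ Y, d y y' < t0 → y' = y) :
    ∃ t, 0 < t ∧ ∀ y' ∈ Y, y' ≠ y → ∀ z ∈ X, ¬(d y z < t ∧ d y' z < t) := by
  by_cases h : ∃ s : M, 0 < s ∧ s + s ≤ t0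
  · obtain ⟨s, hs0, hss⟩ := h
    refine ⟨s, hs0, ?_⟩
    rintro y' hy' hne z hz ⟨h1, h2⟩
    have h3 : d y y' ≤ d y z + d z y' := htri y (hYX hy) z hz y' (hYX hy')
    rw [hsymm z hz y' (hYX hy')] at h3
    have : d y y' < t0 := lt_of_le_of_lt h3 (lt_of_lt_of_le (add_lt_add h1 h2) hss)
    exact hne (hiso y' hy' this)
  · refine ⟨t0, ht0, ?_⟩
    rintro y' hy' hne z hz ⟨h1, h2⟩
    have hge : t0 ≤ d y y' := by
      by_contra hlt
      push_neg at hlt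
      exact hne (hiso y' hy' hlt)
    set c := max (d y z) (d y' z) with hc
    have hct : c < t0 := max_lt h1 h2
    have h3 : d y y' ≤ d y z + d z y' := htri y (hYX hy) z hz y' (hYX hy')
    rw [hsymm z hz y' (hYX hy')] at h3
    have h4 : t0 ≤ c + c :=
      le_trans hge (le_trans h3 (add_le_add (le_max_left _ _) (le_max_right _ _)))
    refine h ⟨t0 - c, sub_pos.2 hct, ?_⟩
    have : (t0 - c) + (t0 - c) = (t0 + t0) - (c + c) := by abel
    rw [this, sub_le_iff_le_add]
    exact add_le_add_right h4 t0
end TopAux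

/-- Graph of the metric `d` (same set as in `IsDefMetricSpace`). -/
def dGraph {M : Type*} [AddCommGroup M] [LinearOrder M] [IsOrderedAddMonoid M] {n : ℕ} (X : Set (Fin n → M))
    (d : (Fin n → M) → (Fin n → M) → M) : Set (((Fin n ⊕ Fin n) ⊕ Fin 1) → M) :=
  {p | (fun i => p (Sum.inl (Sum.inl i))) ∈ X ∧ (fun i => p (Sum.inl (Sum.inr i))) ∈ X ∧
      d (fun i => p (Sum.inl (Sum.inl i))) (fun i => p (Sum.inl (Sum.inr i))) = p (Sum.inr 0)}

/-- Witness set for failure of separation radius. Coordinates: `inl = (y, t)`,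
`inr = ((y', z), (r1, r2))`. -/
def sepBad {M : Type*} [AddCommGroup M] [LinearOrder M] [IsOrderedAddMonoid M] {n : ℕ} (X Y : Set (Fin n → M))
    (d : (Fin n → M) → (Fin n → M) → M) :
    Set (((Fin n ⊕ Fin 1) ⊕ ((Fin n ⊕ Fin n) ⊕ (Fin 1 ⊕ Fin 1))) → M) :=
  {p | (p ∘ fun i : Fin n => Sum.inr (Sum.inl (Sum.inl i))) ∈ Y} ∩
  {p | p ∘ (fun i : Fin n => Sum.inr (Sum.inl (Sum.inl i))) =
      p ∘ (fun i : Fin n => Sum.inl (Sum.inl i))}ᶜ ∩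
  {p | (p ∘ Sum.elim (Sum.elim (fun i : Fin n => Sum.inl (Sum.inl i))
      (fun i : Fin n => Sum.inr (Sum.inl (Sum.inr i))))
      (fun _ : Fin 1 => Sum.inr (Sum.inr (Sum.inl 0)))) ∈ dGraph X d} ∩
  {p | (p ∘ Sum.elim (Sum.elim (fun i : Fin n => Sum.inr (Sum.inl (Sum.inl i)))
      (fun i : Fin n => Sum.inr (Sum.inl (Sum.inr i))))
      (fun _ : Fin 1 => Sum.inr (Sum.inr (Sum.inr 0)))) ∈ dGraph X d} ∩
  {p | p (Sum.inr (Sum.inr (Sum.inl 0))) < p (Sum.inl (Sum.inr 0))} ∩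
  {p | p (Sum.inr (Sum.inr (Sum.inr 0))) < p (Sum.inl (Sum.inr 0))}

/-- The definable family of separating radii. -/
def sepFam {M : Type*} [AddCommGroup M] [LinearOrder M] [IsOrderedAddMonoid M] {n : ℕ} (X Y : Set (Fin n → M))
    (d : (Fin n → M) → (Fin n → M) → M) : Set ((Fin n ⊕ Fin 1) → M) :=
  {q | (q ∘ Sum.inl) ∈ Y} ∩ {q | 0 < q (Sum.inr 0)} ∩
  {q | ∃ w : ((Fin n ⊕ Fin n) ⊕ (Fin 1 ⊕ Fin 1)) → M, Sum.elim q w ∈ sepBad X Y d}ᶜ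

section E2
variable {L : FirstOrder.Language} {M : Type*} [L.Structure M] [AddCommGroup M] [LinearOrder M] [IsOrderedAddMonoid M]
  {n : ℕ} {X Y : Set (Fin n → M)} {d : (Fin n → M) → (Fin n → M) → M}

lemma sepFam_definable (hexp : ExpandsOrderedGroup L M)
    (hY : Set.Definable (Set.univ : Set M) L Y)
    (hGd : Set.Definable (Set.univ : Set M) L (dGraph X d)) :
    Set.Definable (Set.univ : Set M) L (sepFam X Y d) := by
  have hbad : Set.Definable (Set.univ : Set M) L (sepBad X Y d) :=
    ((((((defin_pull _ hY).inter (defin_eqTuple _ _).compl).inter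
      (defin_pull _ hGd)).inter (defin_pull _ hGd)).inter
      (defin_lt hexp.1 _ _)).inter (defin_lt hexp.1 _ _))
  exact ((defin_pull Sum.inl hY).inter (defin_pos hexp.1 hexp.2 _)).inter
    (defin_exists hbad).compl

lemma sepBad_exists_iff {q : (Fin n ⊕ Fin 1) → M} :
    (∃ w : ((Fin n ⊕ Fin n) ⊕ (Fin 1 ⊕ Fin 1)) → M, Sum.elim q w ∈ sepBad X Y d) ↔
      ∃ y' z : Fin n → M, y' ∈ Y ∧ y' ≠ q ∘ Sum.inl ∧ (q ∘ Sum.inl) ∈ X ∧ z ∈ X ∧ y' ∈ X ∧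
        d (q ∘ Sum.inl) z < q (Sum.inr 0) ∧ d y' z < q (Sum.inr 0) := by
  constructor
  · rintro ⟨w, ⟨⟨⟨⟨⟨h1, h2⟩, h3⟩, h4⟩, h5⟩, h6⟩⟩
    exact ⟨fun i => w (Sum.inl (Sum.inl i)), fun i => w (Sum.inl (Sum.inr i)), h1, h2,
      h3.1, h3.2.1, h4.1, h3.2.2.trans_lt h5, h4.2.2.trans_lt h6⟩
  · rintro ⟨y', z, hy', hne, hbX, hzX, hy'X, hd1, hd2⟩
    refine ⟨Sum.elim (Sum.elim y' z)
      (Sum.elim (fun _ => d (q ∘ Sum.inl) z) (fun _ => d y' z)),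
      ⟨⟨⟨⟨⟨?_, ?_⟩, ?_⟩, ?_⟩, ?_⟩, ?_⟩⟩
    · exact hy'
    · exact hne
    · exact ⟨hbX, hzX, rfl⟩
    · exact ⟨hy'X, hzX, rfl⟩
    · exact hd1
    · exact hd2

lemma mem_sepFam_iff {y : Fin n → M} {a : Fin 1 → M} :
    Sum.elim y a ∈ sepFam X Y d ↔ y ∈ Y ∧ 0 < a 0 ∧
      ∀ y' ∈ Y, y' ≠ y → ∀ z ∈ X, y ∈ X → y' ∈ X →
        ¬(d y z < a 0 ∧ d y' z < a 0) := by
  constructor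
  · rintro ⟨⟨h1, h2⟩, h3⟩
    refine ⟨h1, h2, fun y' hy' hne z hz hyX hy'X hlt => ?_⟩
    exact h3 (sepBad_exists_iff.mpr ⟨y', z, hy', hne, hyX, hz, hy'X, hlt.1, hlt.2⟩)
  · rintro ⟨h1, h2, h3⟩
    refine ⟨⟨h1, h2⟩, fun hex => ?_⟩
    obtain ⟨y', z, hy', hne, hbX, hzX, hy'X, hd1, hd2⟩ := sepBad_exists_iff.mp hex
    exact h3 y' hy' hne z hzX hbX hy'X ⟨hd1, hd2⟩

end E2

/-- Witness set for `d(b, a) < f(b)`. Coordinates: `inl = (b, a)`, `inr = (r, t)`. -/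
def ballBad {M : Type*} [AddCommGroup M] [LinearOrder M] [IsOrderedAddMonoid M] {n : ℕ} (X Y : Set (Fin n → M))
    (d : (Fin n → M) → (Fin n → M) → M) (f : (Fin n → M) → (Fin 1 → M)) :
    Set (((Fin n ⊕ Fin n) ⊕ (Fin 1 ⊕ Fin 1)) → M) :=
  {p | (p ∘ Sum.elim (Sum.elim (fun i : Fin n => Sum.inl (Sum.inl i))
      (fun i : Fin n => Sum.inl (Sum.inr i)))
      (fun _ : Fin 1 => Sum.inr (Sum.inl 0))) ∈ dGraph X d} ∩
  {p | (p ∘ Sum.elim (fun i : Fin n => Sum.inl (Sum.inl i))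
      (fun _ : Fin 1 => Sum.inr (Sum.inr 0))) ∈
      {r : (Fin n ⊕ Fin 1) → M | (r ∘ Sum.inl) ∈ Y ∧ r ∘ Sum.inr = f (r ∘ Sum.inl)}} ∩
  {p | p (Sum.inr (Sum.inl 0)) < p (Sum.inr (Sum.inr 0))}

/-- The family of balls around points of `Y` with radii given by `f`. -/
def ballFam {M : Type*} [AddCommGroup M] [LinearOrder M] [IsOrderedAddMonoid M] {n : ℕ} (X Y : Set (Fin n → M))
    (d : (Fin n → M) → (Fin n → M) → M) (f : (Fin n → M) → (Fin 1 → M)) :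
    Set ((Fin n ⊕ Fin n) → M) :=
  {p | (p ∘ Sum.inl) ∈ Y} ∩ {p | (p ∘ Sum.inr) ∈ X} ∩
  {p | ∃ w : (Fin 1 ⊕ Fin 1) → M, Sum.elim p w ∈ ballBad X Y d f}

section E2b
variable {L : FirstOrder.Language} {M : Type*} [L.Structure M] [AddCommGroup M] [LinearOrder M] [IsOrderedAddMonoid M]
  {n : ℕ} {X Y : Set (Fin n → M)} {d : (Fin n → M) → (Fin n → M) → M}
  {f : (Fin n → M) → (Fin 1 → M)}

lemma ballFam_definable (hexp : ExpandsOrderedGroup L M)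
    (hX : Set.Definable (Set.univ : Set M) L X)
    (hY : Set.Definable (Set.univ : Set M) L Y)
    (hGd : Set.Definable (Set.univ : Set M) L (dGraph X d))
    (hGf : Set.Definable (Set.univ : Set M) L
      {r : (Fin n ⊕ Fin 1) → M | (r ∘ Sum.inl) ∈ Y ∧ r ∘ Sum.inr = f (r ∘ Sum.inl)}) :
    Set.Definable (Set.univ : Set M) L (ballFam X Y d f) := by
  have hbad : Set.Definable (Set.univ : Set M) L (ballBad X Y d f) :=
    ((defin_pull _ hGd).inter (defin_pull _ hGf)).inter (defin_lt hexp.1 _ _)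
  exact ((defin_pull Sum.inl hY).inter (defin_pull Sum.inr hX)).inter (defin_exists hbad)

lemma mem_ballFam_iff (hYX : Y ⊆ X) {b a : Fin n → M} (hb : b ∈ Y) :
    Sum.elim b a ∈ ballFam X Y d f ↔ a ∈ X ∧ d b a < f b 0 := by
  constructor
  · rintro ⟨⟨h1, h2⟩, ⟨w, ⟨⟨hd1, hf1⟩, hlt⟩⟩⟩
    have hr : d b a = w (Sum.inl 0) := hd1.2.2
    have ht : w (Sum.inr 0) = f b 0 := (congrFun hf1.2 0).trans rfl
    rw [hr, ← ht]
    exact ⟨h2, hlt⟩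
  · rintro ⟨haX, hlt⟩
    refine ⟨⟨hb, haX⟩, ⟨Sum.elim (fun _ => d b a) (fun _ => f b 0), ⟨⟨?_, ?_⟩, ?_⟩⟩⟩
    · exact ⟨hYX hb, haX, rfl⟩
    · exact ⟨hb, funext fun j => by rw [Subsingleton.elim j 0]; rfl⟩
    · exact hlt

lemma fiberAt_ballFam (hYX : Y ⊆ X) {b : Fin n → M} (hb : b ∈ Y) :
    fiberAt (ballFam X Y d f) b = mball X d b (f b 0) := by
  ext a
  exact mem_ballFam_iff hYX hb

end E2b

lemma disc_imp_not_sep {L : FirstOrder.Language} {M : Type*} [L.Structure M]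
    [AddCommGroup M] [LinearOrder M] [IsOrderedAddMonoid M]
    (hexp : ExpandsOrderedGroup L M) (hchoice : HasDefinableChoice L M) {n : ℕ}
    (X : Set (Fin n → M)) (d : (Fin n → M) → (Fin n → M) → M)
    (hmet : IsDefMetricSpace L X d) (hpos : ∃ t : M, 0 < t)
    (hD : HasInfiniteDefDiscreteSubspace L X (metricTop X d)) :
    ¬ DefSeparable L X (metricTop X d) := by
  obtain ⟨hXdef, hGd, hnonneg, hdid, hsymm, htri⟩ := hmet
  obtain ⟨Y, hYX, hYdef, hYinf, hbot⟩ := hD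
  -- every point of Y is isolated in Y
  have hiso : ∀ y, y ∈ Y → ∃ t0 > (0 : M), ∀ y' ∈ Y, d y y' < t0 → y' = y := by
    intro y hy
    have hU : (TopologicalSpace.induced (fun v : ↥Y => (⟨v.1, hYX v.2⟩ : ↥X))
        (metricTop X d)).IsOpen {(⟨y, hy⟩ : ↥Y)} := by
      rw [hbot]
      exact @isOpen_discrete _ ⊥ (discreteTopology_bot _) _
    obtain ⟨t0, ht0, hb⟩ := metricTop_subspace_basis hYX htri hpos hU (Set.mem_singleton _)
    refine ⟨t0, ht0, fun y' hy' hd' => ?_⟩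
    exact congrArg Subtype.val (hb ⟨y', hy'⟩ hd')
  -- the family of separating radii has nonempty fibers
  have hfib : ∀ y ∈ Y, (fiberAt (sepFam X Y d) y).Nonempty := by
    intro y hy
    obtain ⟨t0, ht0, hiso'⟩ := hiso y hy
    obtain ⟨t, ht, hsep⟩ := exists_sep_radius hsymm htri hYX hy ht0 hiso'
    refine ⟨fun _ => t, ?_⟩
    show Sum.elim y (fun _ => t) ∈ sepFam X Y d
    rw [mem_sepFam_iff]
    exact ⟨hy, ht, fun y' hy' hne z hz _ _ hlt => hsep y' hy' hne z hz hlt⟩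
  -- definable choice of radii
  obtain ⟨f, hGf, hfmem, -⟩ := hchoice n 1 Y (sepFam X Y d) hYdef
    (sepFam_definable hexp hYdef hGd) hfib
  have hprop : ∀ y ∈ Y, 0 < f y 0 ∧ ∀ y' ∈ Y, y' ≠ y → ∀ z ∈ X,
      ¬(d y z < f y 0 ∧ d y' z < f y 0) := by
    intro y hy
    have := mem_sepFam_iff.mp (hfmem y hy)
    exact ⟨this.2.1, fun y' hy' hne z hz =>
      this.2.2 y' hy' hne z hz (hYX hy) (hYX hy')⟩
  -- contradiction with definable separability
  intro hsep
  refine hsep ⟨n, Y, ballFam X Y d f, hYdef,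
    ballFam_definable hexp hXdef hYdef hGd hGf, ?_, ?_, ?_⟩
  · intro b hb
    rw [fiberAt_ballFam hYX hb]
    constructor
    · exact fun a ha => ha.1
    · exact TopologicalSpace.isOpen_generateFrom_of_mem ⟨b, hYX hb, f b 0, (hprop b hb).1, rfl⟩
  · intro b hb c hc hne
    have hbc : b ≠ c := fun h => hne (by rw [h])
    rw [fiberAt_ballFam hYX hb, fiberAt_ballFam hYX hc, Set.disjoint_left]
    intro z hzb hzc
    rcases le_total (f b 0) (f c 0) with h | h
    · exact (hprop c hc).2 b hb hbc z hzb.1 ⟨hzc.2, lt_of_lt_of_le hzb.2 h⟩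
    · exact (hprop b hb).2 c hc hbc.symm z hzb.1 ⟨hzb.2, lt_of_lt_of_le hzc.2 h⟩
  · have heq : {s : Set (Fin n → M) | ∃ b ∈ Y, s = fiberAt (ballFam X Y d f) b} =
        (fun b => fiberAt (ballFam X Y d f) b) '' Y := by
      ext s
      simp only [Set.mem_image, Set.mem_setOf_eq]
      exact ⟨fun ⟨b, hb, h⟩ => ⟨b, hb, h.symm⟩, fun ⟨b, hb, h⟩ => ⟨b, hb, h.symm⟩⟩
    rw [heq]
    apply hYinf.image
    intro b hb c hc hfe
    by_contra hbc
    have hbmem : b ∈ fiberAt (ballFam X Y d f) b := by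
      rw [fiberAt_ballFam hYX hb]
      exact ⟨hYX hb, by rw [(hdid b (hYX hb) b (hYX hb)).mpr rfl]; exact (hprop b hb).1⟩
    have hfe' : fiberAt (ballFam X Y d f) b = fiberAt (ballFam X Y d f) c := hfe
    rw [hfe', fiberAt_ballFam hYX hc] at hbmem
    exact (hprop c hc).2 b hb hbc b (hYX hb)
      ⟨hbmem.2, by rw [(hdid b (hYX hb) b (hYX hb)).mpr rfl]; exact (hprop c hc).1⟩

lemma not_her_imp_disc {L : FirstOrder.Language} {M : Type*} [L.Structure M]
    [AddCommGroup M] [LinearOrder M] [IsOrderedAddMonoid M]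
    (hchoice : HasDefinableChoice L M) {n : ℕ}
    (X : Set (Fin n → M)) (d : (Fin n → M) → (Fin n → M) → M)
    (hmet : IsDefMetricSpace L X d) (hpos : ∃ t : M, 0 < t)
    (hnH : ¬ HereditarilyDefSeparable L X (metricTop X d)) :
    HasInfiniteDefDiscreteSubspace L X (metricTop X d) := by
  obtain ⟨_, _, _, hdid, hsymm, htri⟩ := hmet
  rw [HereditarilyDefSeparable] at hnH
  push_neg at hnH
  obtain ⟨Y, hYX, hYdef, hnsep⟩ := hnH
  rw [DefSeparable, not_not] at hnsep
  obtain ⟨k, B, T, hBdef, hTdef, hopen, hdisj, hinf⟩ := hnsep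
  classical
  -- restrict to indices with nonempty fiber
  set B' : Set (Fin k → M) := B ∩ {b | ∃ a : Fin n → M, Sum.elim b a ∈ T} with hB'
  have hB'def : Set.Definable (Set.univ : Set M) L B' := hBdef.inter (defin_exists hTdef)
  have hfib : ∀ b ∈ B', (fiberAt T b).Nonempty := fun b hb => hb.2
  obtain ⟨f, hfdef, hfmem, hfcons⟩ := hchoice k n B' T hB'def hTdef hfib
  set Z : Set (Fin n → M) :=
    (fun p : (Fin k ⊕ Fin n) → M => p ∘ Sum.inr) ''
      {p : (Fin k ⊕ Fin n) → M | (p ∘ Sum.inl) ∈ B' ∧ p ∘ Sum.inr = f (p ∘ Sum.inl)} with hZ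
  have hZdef : Set.Definable (Set.univ : Set M) L Z := hfdef.image_comp Sum.inr
  have hZmem : ∀ z, z ∈ Z ↔ ∃ b ∈ B', f b = z := by
    intro z
    constructor
    · rintro ⟨p, ⟨hp1, hp2⟩, rfl⟩
      exact ⟨p ∘ Sum.inl, hp1, hp2.symm⟩
    · rintro ⟨b, hb, rfl⟩
      refine ⟨Sum.elim b (f b), ⟨?_, ?_⟩, ?_⟩
      · rw [Sum.elim_comp_inl]; exact hb
      · rw [Sum.elim_comp_inr, Sum.elim_comp_inl]
      · exact Sum.elim_comp_inr b (f b)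
  have hfY : ∀ b ∈ B', f b ∈ Y := fun b hb => (hopen b hb.1).1 (hfmem b hb)
  have hZY : Z ⊆ Y := by
    intro z hz
    obtain ⟨b, hb, rfl⟩ := (hZmem z).mp hz
    exact hfY b hb
  have hZX : Z ⊆ X := fun z hz => hYX (hZY hz)
  -- Z is infinite
  have hS' : {s : Set (Fin n → M) | ∃ b ∈ B', s = fiberAt T b}.Infinite := by
    have hsub : {s : Set (Fin n → M) | ∃ b ∈ B, s = fiberAt T b} ⊆
        {s : Set (Fin n → M) | ∃ b ∈ B', s = fiberAt T b} ∪ {∅} := by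
      rintro s ⟨b, hb, rfl⟩
      by_cases he : (fiberAt T b).Nonempty
      · exact Or.inl ⟨b, ⟨hb, he⟩, rfl⟩
      · exact Or.inr (by simpa using Set.not_nonempty_iff_eq_empty.mp he)
    have h1 := hinf.mono hsub
    have h2 := h1.diff (Set.finite_singleton (∅ : Set (Fin n → M)))
    apply h2.mono
    rintro s ⟨hs, hs2⟩
    rcases hs with hs | hs
    · exact hs
    · exact absurd hs hs2
  have hZinf : Z.Infinite := by
    by_contra hfin
    rw [Set.not_infinite] at hfin
    set F : Set (Fin n → M) → (Fin n → M) := fun s =>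
      if h : ∃ b, b ∈ B' ∧ s = fiberAt T b then f h.choose else (fun _ => 0) with hF
    have hFs : ∀ {s : Set (Fin n → M)} (hs : ∃ b, b ∈ B' ∧ s = fiberAt T b),
        F s = f hs.choose := fun hs => dif_pos hs
    have hmaps : ∀ s ∈ {s : Set (Fin n → M) | ∃ b ∈ B', s = fiberAt T b}, F s ∈ Z := by
      intro s hs
      rw [hFs hs]
      exact (hZmem _).mpr ⟨hs.choose, hs.choose_spec.1, rfl⟩
    have hinj : Set.InjOn F {s : Set (Fin n → M) | ∃ b ∈ B', s = fiberAt T b} := by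
      intro s hs s' hs' heq
      by_contra hne
      rw [hFs hs, hFs hs'] at heq
      have h1 := hfmem _ hs.choose_spec.1
      have h2 := hfmem _ hs'.choose_spec.1
      have hfne : fiberAt T hs.choose ≠ fiberAt T hs'.choose := by
        rw [← hs.choose_spec.2, ← hs'.choose_spec.2]; exact hne
      have hd := hdisj _ hs.choose_spec.1.1 _ hs'.choose_spec.1.1 hfne
      exact Set.disjoint_left.mp hd h1 (heq ▸ h2)
    have himg : F '' {s : Set (Fin n → M) | ∃ b ∈ B', s = fiberAt T b} ⊆ Z := by
      rintro _ ⟨s, hs, rfl⟩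
      exact hmaps s hs
    exact hS' (Set.Finite.of_finite_image (hfin.subset himg) hinj)
  refine ⟨Z, hZX, hZdef, hZinf, ?_⟩
  letI : TopologicalSpace ↥X := metricTop X d
  apply eq_bot_of_singletons_open
  intro w
  obtain ⟨b, hb, hfb⟩ := (hZmem w.1).mp w.2
  have hop := (hopen b hb.1).2
  have hmem : (⟨f b, hfY b hb⟩ : ↥Y) ∈ (Subtype.val ⁻¹' fiberAt T b : Set ↥Y) := hfmem b hb
  obtain ⟨t, ht, hball⟩ := metricTop_subspace_basis hYX htri hpos hop hmem
  rw [isOpen_induced_iff]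
  refine ⟨Subtype.val ⁻¹' mball X d w.1 t, ?_, ?_⟩
  · exact TopologicalSpace.isOpen_generateFrom_of_mem ⟨w.1, hZX w.2, t, ht, rfl⟩
  · ext v
    simp only [Set.mem_preimage, Set.mem_singleton_iff]
    constructor
    · intro hv
      have hdv : d w.1 v.1 < t := hv.2
      obtain ⟨b', hb', hfb'⟩ := (hZmem v.1).mp v.2
      have hvY : v.1 ∈ Y := hZY v.2
      have h1 : v.1 ∈ fiberAt T b := hball ⟨v.1, hvY⟩ (by show d (f b) v.1 < t; rw [hfb]; exact hdv)
      have h2 : v.1 ∈ fiberAt T b' := by rw [← hfb']; exact hfmem b' hb'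
      have heq : fiberAt T b = fiberAt T b' := by
        by_contra hne
        exact Set.disjoint_left.mp (hdisj b hb.1 b' hb'.1 hne) h1 h2
      have hff : f b = f b' := hfcons b hb b' hb' heq
      apply Subtype.ext
      rw [← hfb', ← hff, hfb]
    · intro h
      rw [h]
      exact ⟨hZX w.2, by rw [(hdid w.1 (hZX w.2) w.1 (hZX w.2)).mpr rfl]; exact ht⟩

/-- Let `M` be an expansion of an ordered group with definable choice and
`(X, d)` a definable metric space with its metric topology. The following are equivalent:
(1) `(X, d)` is definably separable; (2) `(X, d)` is hereditarily definably separable;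
(3) `(X, d)` contains no infinite definable subset whose subspace topology is discrete. -/
theorem defMetric_defSeparable_iff_hereditarily_iff_no_discrete
    {L : FirstOrder.Language} {M : Type*} [L.Structure M] [AddCommGroup M] [LinearOrder M] [IsOrderedAddMonoid M]
    (hexp : ExpandsOrderedGroup L M) (hchoice : HasDefinableChoice L M) {n : ℕ}
    (X : Set (Fin n → M)) (d : (Fin n → M) → (Fin n → M) → M)
    (hmet : IsDefMetricSpace L X d) :
    (DefSeparable L X (metricTop X d) ↔ HereditarilyDefSeparable L X (metricTop X d)) ∧
    (HereditarilyDefSeparable L X (metricTop X d) ↔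
      ¬ HasInfiniteDefDiscreteSubspace L X (metricTop X d)) := by
  by_cases hpos : ∃ t : M, 0 < t
  · have E1 : HereditarilyDefSeparable L X (metricTop X d) →
        DefSeparable L X (metricTop X d) := by
      intro hH
      have h := hH X (subset_refl X) hmet.1
      have hid : (fun y : ↥X => (⟨y.1, (subset_refl X) y.2⟩ : ↥X)) = id := rfl
      letI : TopologicalSpace ↥X := metricTop X d
      rwa [hid, induced_id] at h
    have E2 := disc_imp_not_sep hexp hchoice X d hmet hpos
    have E3 := not_her_imp_disc hchoice X d hmet hpos
    refine ⟨⟨fun hS => ?_, E1⟩, ⟨fun hH hD => E2 hD (E1 hH), fun hnD => ?_⟩⟩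
    · by_contra hnH
      exact E2 (E3 hnH) hS
    · by_contra hnH
      exact hnD (E3 hnH)
  · have hsub : Subsingleton M := by
      constructor
      intro a b
      have h : ∀ x : M, x ≤ 0 := fun x => not_lt.mp fun hx => hpos ⟨x, hx⟩
      exact le_antisymm (sub_nonpos.mp (h (a - b))) (sub_nonpos.mp (h (b - a)))
    haveI := hsub
    haveI : Finite (Fin n → M) := Finite.of_subsingleton
    have hS : DefSeparable L X (metricTop X d) := by
      rintro ⟨k, B, T, -, -, -, -, hinf⟩
      exact hinf (Set.toFinite _)
    have hH : HereditarilyDefSeparable L X (metricTop X d) := by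
      intro Y hYX hYdef
      rintro ⟨k, B, T, -, -, -, -, hinf⟩
      exact hinf (Set.toFinite _)
    have hnD : ¬ HasInfiniteDefDiscreteSubspace L X (metricTop X d) := by
      rintro ⟨Y, hYX, -, hYinf, -⟩
      exact hYinf (Set.toFinite _)
    exact ⟨⟨fun _ => hH, fun _ => hS⟩, ⟨fun _ => hnD, fun _ => hH⟩⟩
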